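/- (Call-by-name application soundness, closed terms) If a₁ :_k (τ → τ') and a₂ :_k τ, then (a₁ a₂) :_k τ'. -/
import Mathlib


/-- Terms of the call-by-name λ-calculus with constants and a fixpoint operator. -/
inductive Tm where
  | const : ℕ → Tm
  | var : String → Tm
  | lam : String → Tm → Tm
  | app : Tm → Tm → Tm
  | fix : Tm → Tm
deriving DecidableEq

/-- Substitution of `b` for free occurrences of `x` (capture-avoiding when `b` is closed). -/
def subst (x : String) (b : Tm) : Tm → Tm
  | .const c => .const c
  | .var y => if y = x then b else .var y
  | .lam y a => if y = x then .lam y a else .lam y (subst x b a)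
  | .app a1 a2 => .app (subst x b a1) (subst x b a2)
  | .fix a => .fix (subst x b a)

/-- Free variables. -/
def fv : Tm → Set String
  | .const _ => ∅
  | .var y => {y}
  | .lam y a => fv a \ {y}
  | .app a b => fv a ∪ fv b
  | .fix a => fv a

def Closed (a : Tm) : Prop := fv a = ∅

/-- Call-by-name small-step semantics. -/
inductive Step : Tm → Tm → Prop
  | beta (x : String) (a b : Tm) : Step (.app (.lam x a) b) (subst x b a)
  | app1 {a a' : Tm} (b : Tm) : Step a a' → Step (.app a b) (.app a' b)
  | fix (a : Tm) : Step (.fix a) (.app a (.fix a))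

/-- `Steps j a b` means `a →^j b`. -/
inductive Steps : ℕ → Tm → Tm → Prop
  | refl (a : Tm) : Steps 0 a a
  | head {a b c : Tm} {j : ℕ} : Step a b → Steps j b c → Steps (j + 1) a c

/-- Values: constants and closed λ-abstractions. -/
def IsValue (v : Tm) : Prop :=
  (∃ c, v = .const c) ∨ (∃ x a, v = .lam x a ∧ Closed v)

/-- Irreducible terms. -/
def Irred (a : Tm) : Prop := ¬ ∃ b, Step a b

/-- Semantic types are sets of pairs (index, value). -/
abbrev SemType := Set (ℕ × Tm)

/-- A type contains only values and is closed under decreasing index. -/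
def IsType (τ : SemType) : Prop :=
  (∀ p ∈ τ, IsValue p.2) ∧ ∀ k v j, (k, v) ∈ τ → j ≤ k → (j, v) ∈ τ

/-- `a :ₖ τ`: `a` is closed and whenever `a →^j b` with `b` irreducible and `j < k`,
then `(k - j, b) ∈ τ`. -/
def HasTypeIdx (a : Tm) (k : ℕ) (τ : SemType) : Prop :=
  Closed a ∧ ∀ j b, j < k → Steps j a b → Irred b → (k - j, b) ∈ τ

/-- The semantic function type `τ → τ'`. -/
def Arrow (τ τ' : SemType) : SemType :=
  {p | ∃ x a, p.2 = Tm.lam x a ∧ Closed (Tm.lam x a) ∧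
    ∀ j < p.1, ∀ b, HasTypeIdx b j τ → HasTypeIdx (subst x b a) j τ'}

/-- The semantic type `Nat` of constants. -/
def NatTy : SemType := {p | ∃ c, p.2 = Tm.const c}

/-- `a` is safe for `k` steps. -/
def SafeFor (k : ℕ) (a : Tm) : Prop :=
  ∀ j b, j < k → Steps j a b → IsValue b ∨ ∃ b', Step b b'

/-- `a` is safe. -/
def Safe (a : Tm) : Prop := ∀ k, SafeFor k a

/-- Applying a ground substitution `γ` to a term. -/
def applySubst (γ : String → Option Tm) : Tm → Tm
  | .const c => .const c
  | .var y => (γ y).getD (.var y)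
  | .lam y a => .lam y (applySubst (fun z => if z = y then none else γ z) a)
  | .app a b => .app (applySubst γ a) (applySubst γ b)
  | .fix a => .fix (applySubst γ a)

/-- `γ :ₖ Γ`: same domains, and `γ(x) :ₖ Γ(x)` for all `x`. -/
def EnvOK (γ : String → Option Tm) (Γ : String → Option SemType) (k : ℕ) : Prop :=
  (∀ x, (γ x).isSome ↔ (Γ x).isSome) ∧
  ∀ x t τ, γ x = some t → Γ x = some τ → HasTypeIdx t k τ

/-- A type environment maps variables to (semantic) types. -/
def TyEnvOK (Γ : String → Option SemType) : Prop :=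
  ∀ x τ, Γ x = some τ → IsType τ

/-- `Γ ⊨ a :ₖ τ`. -/
def ModelsIdx (Γ : String → Option SemType) (a : Tm) (k : ℕ) (τ : SemType) : Prop :=
  ∀ γ, EnvOK γ Γ k → HasTypeIdx (applySubst γ a) k τ

/-- `Γ ⊨ a : τ`. -/
def Models (Γ : String → Option SemType) (a : Tm) (τ : SemType) : Prop :=
  ∀ k, ModelsIdx Γ a k τ

/-- Update of a partial map. -/
def upd {α : Type _} (f : String → Option α) (x : String) (v : α) :
    String → Option α := fun y => if y = x then some v else f y

/-- The k-approximation of an indexed set. -/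
def floorTy (τ : SemType) (k : ℕ) : SemType := {p ∈ τ | p.1 < k}

/-- Well founded functionals. -/
def WFF (F : SemType → SemType) : Prop :=
  (∀ τ, IsType τ → IsType (F τ)) ∧
  ∀ τ k, IsType τ → floorTy (F τ) (k + 1) = floorTy (F (floorTy τ k)) (k + 1)

/-- The candidate fixed point `μF`. -/
def muF (F : SemType → SemType) : SemType := {p | p ∈ F^[p.1 + 1] ∅}

lemma irred_lam (x : String) (a : Tm) : Irred (Tm.lam x a) := by
  rintro ⟨b, hb⟩; cases hb

lemma hasTypeIdx_mono {a : Tm} {k k' : ℕ} {τ : SemType} (hτ : IsType τ)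
    (h : HasTypeIdx a k τ) (hk : k' ≤ k) : HasTypeIdx a k' τ := by
  refine ⟨h.1, fun j b hj hs hi => ?_⟩
  exact hτ.2 (k - j) b (k' - j) (h.2 j b (lt_of_lt_of_le hj hk) hs hi) (by omega)

lemma app_decomp (a₂ : Tm) : ∀ j a c, Steps j a c → ∀ a₁, a = Tm.app a₁ a₂ →
    (∃ v, Steps j a₁ v ∧ c = Tm.app v a₂) ∨
    (∃ j₁ x a0 j₂, Steps j₁ a₁ (Tm.lam x a0) ∧ Steps j₂ (subst x a₂ a0) c ∧
      j = j₁ + 1 + j₂) := by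
  intro j a c h
  induction h with
  | refl a => intro a₁ heq; exact Or.inl ⟨a₁, Steps.refl _, heq ▸ rfl⟩
  | @head a b c j hs hrest ih =>
    intro a₁ heq
    subst heq
    cases hs with
    | beta x a0 b0 =>
      exact Or.inr ⟨0, x, a0, j, Steps.refl _, hrest, by omega⟩
    | app1 b hs' =>
      rcases ih _ rfl with ⟨v, hv, rfl⟩ | ⟨j₁, x, a0, j₂, h1, h2, rfl⟩
      · exact Or.inl ⟨v, Steps.head hs' hv, rfl⟩
      · exact Or.inr ⟨j₁ + 1, x, a0, j₂, Steps.head hs' h1, h2, by omega⟩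

theorem application_closed (a₁ a₂ : Tm) (k : ℕ) (τ τ' : SemType)
    (hτ : IsType τ) (hτ' : IsType τ')
    (h₁ : HasTypeIdx a₁ k (Arrow τ τ')) (h₂ : HasTypeIdx a₂ k τ) :
    HasTypeIdx (Tm.app a₁ a₂) k τ' := by
  have hcl : Closed (Tm.app a₁ a₂) := by
    have h1 := h₁.1; have h2 := h₂.1
    show fv a₁ ∪ fv a₂ = ∅
    rw [h1, h2]; simp
  refine ⟨hcl, fun j c hj hs hi => ?_⟩
  rcases app_decomp a₂ j _ c hs a₁ rfl with ⟨v, hv, rfl⟩ | ⟨j₁, x, a0, j₂, hs1, hs2, rfl⟩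
  · -- a₁ reached irreducible v, c = app v a₂
    have hvI : Irred v := fun ⟨v', hv'⟩ => hi ⟨Tm.app v' a₂, Step.app1 a₂ hv'⟩
    obtain ⟨x, a0, he, -, -⟩ := h₁.2 j v hj hv hvI
    have he' : v = Tm.lam x a0 := he
    subst he'
    exact absurd ⟨subst x a₂ a0, Step.beta x a0 a₂⟩ hi
  · have hj₁ : j₁ < k := by omega
    obtain ⟨x', a0', he, -, harr⟩ := h₁.2 j₁ _ hj₁ hs1 (irred_lam x a0)
    obtain ⟨rfl, rfl⟩ : x = x' ∧ a0 = a0' := Tm.lam.inj he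
    have h₂' : HasTypeIdx a₂ (k - j₁ - 1) τ := hasTypeIdx_mono hτ h₂ (by omega)
    have hsub := harr (k - j₁ - 1) (by omega) a₂ h₂'
    have := hsub.2 j₂ c (by omega) hs2 hi
    have heq : k - j₁ - 1 - j₂ = k - (j₁ + 1 + j₂) := by omega
    exact heq ▸ this
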